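/- arXiv:2505.09015 — 4 statements merged into one kernel-verified Lean document; each statement's English description precedes it below -/
import Mathlib

section
/- Let p be a prime number and A a commutative ring in which p is a non-zero divisor. Let m ≥ 1, n ≥ 1 be integers and let x = (a_0, a_1, …, a_{n-1}) ∈ W_n(A) be a p-typical Witt vector of length n. If the r-th ghost component w_r(x) lies in the ideal p^{m+r} A for every 0 ≤ r ≤ n-1, then every coefficient a_r of x lies in the ideal p^m A. -/
/-- The `r`-th ghost component of a (truncated) `p`-typical Witt vector with
coefficients `a 0, a 1, …`:  `w_r(a) = a_0 ^ (p^r) + p * a_1 ^ (p^(r-1)) + ⋯ + p^r * a_r`. -/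
def ghostPoly (p : ℕ) {A : Type*} [CommRing A] (a : ℕ → A) (r : ℕ) : A :=
  ∑ s ∈ Finset.range (r + 1), (p : A) ^ s * a s ^ p ^ (r - s)

/-- If `p` is a non-zero divisor in `A` and all ghost components `w_r` (for `0 ≤ r ≤ n-1`)
of a Witt vector of length `n` lie in `p^(m+r) A`, then all coefficients lie in `p^m A`. -/
theorem coeff_mem_of_ghostPoly_mem (p : ℕ) (hp : p.Prime) (A : Type*) [CommRing A]
    (hpA : (p : A) ∈ nonZeroDivisors A) (m n : ℕ) (hm : 1 ≤ m) (hn : 1 ≤ n) (a : ℕ → A)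
    (ha : ∀ r < n, ghostPoly p a r ∈ Ideal.span {(p : A) ^ (m + r)}) :
    ∀ r < n, a r ∈ Ideal.span {(p : A) ^ m} := by
  intro r
  induction r using Nat.strong_induction_on with
  | _ r ih =>
  intro hr
  have hg := ha r hr
  rw [Ideal.mem_span_singleton] at hg ⊢
  -- lower terms are divisible by p^(m+r)
  have hlow : ∀ s ∈ Finset.range r, (p : A) ^ (m + r) ∣ (p : A) ^ s * a s ^ p ^ (r - s) := by
    intro s hs
    rw [Finset.mem_range] at hs
    have has := ih s hs (hs.trans hr)
    rw [Ideal.mem_span_singleton] at has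
    have h1 : (p : A) ^ (s + m * p ^ (r - s)) ∣ (p : A) ^ s * a s ^ p ^ (r - s) := by
      rw [pow_add]
      exact mul_dvd_mul_left _ (by simpa [← pow_mul] using pow_dvd_pow_of_dvd has (p ^ (r - s)))
    refine dvd_trans (pow_dvd_pow _ ?_) h1
    have hk : r - s + 1 ≤ p ^ (r - s) :=
      Nat.one_add_le_iff.mp (by simpa [add_comm] using Nat.lt_pow_self (n := r - s) hp.one_lt)
    have hrs : r = s + (r - s) := by omega
    nlinarith [Nat.one_le_iff_ne_zero.mp hm]
  have hsum : (p : A) ^ (m + r) ∣ ∑ s ∈ Finset.range r, (p : A) ^ s * a s ^ p ^ (r - s) :=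
    Finset.dvd_sum hlow
  have hlast : (p : A) ^ (m + r) ∣ (p : A) ^ r * a r := by
    have : ghostPoly p a r
        = (∑ s ∈ Finset.range r, (p : A) ^ s * a s ^ p ^ (r - s)) + (p : A) ^ r * a r := by
      rw [ghostPoly, Finset.sum_range_succ]
      simp
    have := hg
    rw [‹ghostPoly p a r = _›] at this
    exact (dvd_add_right hsum).mp this
  obtain ⟨c, hc⟩ := hlast
  refine ⟨c, ?_⟩
  have hcancel : (a r - (p : A) ^ m * c) * (p : A) ^ r = 0 := by
    have : (p : A) ^ r * a r = (p : A) ^ r * ((p : A) ^ m * c) := by rw [hc]; ring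
    linear_combination this
  have := (mul_right_mem_nonZeroDivisors_eq_zero_iff (pow_mem hpA r)).mp hcancel
  linear_combination this
end

section
/- Let p be a prime number and A a commutative ring in which p is a non-zero divisor. Let m ≥ 1, n ≥ 1 be integers. For every tuple (c_0, c_1, …, c_{n-1}) of elements of A with c_r ∈ p^{m+r} A for all 0 ≤ r ≤ n-1, there exists a p-typical Witt vector x = (a_0, …, a_{n-1}) ∈ W_n(A) with a_r ∈ p^m A for all r such that w_r(x) = c_r for every 0 ≤ r ≤ n-1. Consequently, the image of the set of Witt vectors with all coefficients in p^m A under the total ghost map (w_0, …, w_{n-1}) : W_n(A) → A^n equals the subset p^m A × p^{m+1} A × ⋯ × p^{m+n-1} A. -/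
private lemma ghost_aux_ineq (p m t : ℕ) (hp : 2 ≤ p) (hm : 1 ≤ m) (ht : 1 ≤ t) :
    m + t ≤ m * p ^ t := by
  have h1 : t + 1 ≤ p ^ t := (Nat.lt_pow_self hp : t < p ^ t)
  nlinarith

private lemma ghost_term_dvd {A : Type*} [CommRing A] (p m s t : ℕ) (hp : 2 ≤ p)
    (hm : 1 ≤ m) (ht : 1 ≤ t) {a : A} (ha : (p : A) ^ m ∣ a) :
    (p : A) ^ (m + s + t) ∣ (p : A) ^ s * a ^ p ^ t := by
  have h1 : (p : A) ^ (m * p ^ t) ∣ a ^ p ^ t := by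
    have := pow_dvd_pow_of_dvd ha (p ^ t)
    rwa [← pow_mul] at this
  have h2 : (p : A) ^ (s + m * p ^ t) ∣ (p : A) ^ s * a ^ p ^ t := by
    rw [pow_add]; exact mul_dvd_mul_left _ h1
  refine dvd_trans (pow_dvd_pow _ ?_) h2
  have := ghost_aux_ineq p m t hp hm ht
  omega

private lemma ghost_sum_dvd {A : Type*} [CommRing A] (p m r : ℕ) (hp : 2 ≤ p)
    (hm : 1 ≤ m) {a : ℕ → A} (ha : ∀ s < r, (p : A) ^ m ∣ a s) :
    (p : A) ^ (m + r) ∣ ∑ s ∈ Finset.range r, (p : A) ^ s * a s ^ p ^ (r - s) := by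
  apply Finset.dvd_sum
  intro s hs
  have hs' := Finset.mem_range.mp hs
  have h := ghost_term_dvd p m s (r - s) hp hm (by omega) (ha s hs')
  rwa [show m + s + (r - s) = m + r from by omega] at h

private lemma ghost_dvd {A : Type*} [CommRing A] (p m r : ℕ) (hp : 2 ≤ p)
    (hm : 1 ≤ m) {a : ℕ → A} (ha : ∀ s ≤ r, (p : A) ^ m ∣ a s) :
    (p : A) ^ (m + r) ∣ ghostPoly p a r := by
  unfold ghostPoly
  rw [Finset.sum_range_succ]
  refine dvd_add (ghost_sum_dvd p m r hp hm fun s hs => ha s hs.le) ?_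
  rw [Nat.sub_self, pow_zero, pow_one, pow_add, mul_comm ((p:A)^m)]
  exact mul_dvd_mul_left _ (ha r le_rfl)

private lemma ghost_exists {A : Type*} [CommRing A] (p m : ℕ) (hp : 2 ≤ p)
    (hm : 1 ≤ m) (n : ℕ) (c : ℕ → A) (hc : ∀ r < n, (p : A) ^ (m + r) ∣ c r) :
    ∃ a : ℕ → A, (∀ r < n, (p : A) ^ m ∣ a r) ∧ ∀ r < n, ghostPoly p a r = c r := by
  induction n with
  | zero => exact ⟨0, fun r hr => absurd hr (by omega), fun r hr => absurd hr (by omega)⟩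
  | succ n ih =>
    obtain ⟨a, ha, hg⟩ := ih fun r hr => hc r (by omega)
    have hS : (p : A) ^ (m + n) ∣
        c n - ∑ s ∈ Finset.range n, (p : A) ^ s * a s ^ p ^ (n - s) :=
      dvd_sub (hc n (by omega)) (ghost_sum_dvd p m n hp hm ha)
    obtain ⟨b, hb⟩ := hS
    set a' : ℕ → A := Function.update a n ((p : A) ^ m * b) with ha'def
    have hupd : ∀ s < n, a' s = a s := fun s hs =>
      Function.update_of_ne (by omega) _ _
    refine ⟨a', ?_, ?_⟩
    · intro r hr
      rcases Nat.lt_succ_iff_lt_or_eq.mp hr with h | h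
      · rw [hupd r h]; exact ha r h
      · subst h
        rw [ha'def, Function.update_self]
        exact dvd_mul_right _ _
    · intro r hr
      rcases Nat.lt_succ_iff_lt_or_eq.mp hr with h | h
      · rw [← hg r h]
        unfold ghostPoly
        refine Finset.sum_congr rfl fun s hs => ?_
        rw [hupd s (by have := Finset.mem_range.mp hs; omega)]
      · subst h
        unfold ghostPoly
        rw [Finset.sum_range_succ,
          Finset.sum_congr rfl fun s hs => by
            rw [hupd s (Finset.mem_range.mp hs)]]
        rw [ha'def, Function.update_self, Nat.sub_self, pow_zero, pow_one]
        linear_combination -hb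

/-- If `p` is a non-zero divisor in `A`, then every tuple `(c_0, …, c_{n-1})` with
`c_r ∈ p^(m+r) A` is the tuple of ghost components of some Witt vector of length `n`
all of whose coefficients lie in `p^m A`.  Consequently, the image of the set of Witt
vectors with all coefficients in `p^m A` under the total ghost map is exactly
`p^m A × p^(m+1) A × ⋯ × p^(m+n-1) A`. -/
theorem ghostPoly_image_eq (p : ℕ) (hp : p.Prime) (A : Type*) [CommRing A]
    (hpA : (p : A) ∈ nonZeroDivisors A) (m n : ℕ) (hm : 1 ≤ m) (hn : 1 ≤ n) :
    (∀ c : ℕ → A, (∀ r < n, c r ∈ Ideal.span {(p : A) ^ (m + r)}) →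
      ∃ a : ℕ → A, (∀ r < n, a r ∈ Ideal.span {(p : A) ^ m}) ∧
        ∀ r < n, ghostPoly p a r = c r) ∧
    (fun a : ℕ → A => fun r : Fin n => ghostPoly p a (r : ℕ)) ''
        {a : ℕ → A | ∀ i < n, a i ∈ Ideal.span {(p : A) ^ m}} =
      {c : Fin n → A | ∀ r : Fin n, c r ∈ Ideal.span {(p : A) ^ (m + (r : ℕ))}} := by
  have hp2 : 2 ≤ p := hp.two_le
  have hexists : ∀ c : ℕ → A, (∀ r < n, c r ∈ Ideal.span {(p : A) ^ (m + r)}) →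
      ∃ a : ℕ → A, (∀ r < n, a r ∈ Ideal.span {(p : A) ^ m}) ∧
        ∀ r < n, ghostPoly p a r = c r := by
    intro c hc
    obtain ⟨a, ha, hg⟩ := ghost_exists p m hp2 hm n c
      (fun r hr => Ideal.mem_span_singleton.mp (hc r hr))
    exact ⟨a, fun r hr => Ideal.mem_span_singleton.mpr (ha r hr), hg⟩
  refine ⟨hexists, ?_⟩
  ext c
  constructor
  · rintro ⟨a, ha, rfl⟩
    intro r
    exact Ideal.mem_span_singleton.mpr
      (ghost_dvd p m r hp2 hm fun s hs =>
        Ideal.mem_span_singleton.mp (ha s (lt_of_le_of_lt hs r.isLt)))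
  · intro hc
    set c' : ℕ → A := fun r => if h : r < n then c ⟨r, h⟩ else 0 with hc'def
    obtain ⟨a, ha, hg⟩ := hexists c' (by
      intro r hr
      simp only [hc'def, dif_pos hr]
      exact hc ⟨r, hr⟩)
    refine ⟨a, ha, ?_⟩
    funext r
    have := hg r r.isLt
    simpa [hc'def, dif_pos r.isLt] using this
end

section
/- Let p be a prime number, A a commutative ring in which p is a non-zero divisor, and n ≥ 1 an integer. Let π : A → A/pA be the quotient map and W_n(π) : W_n(A) → W_n(A/pA) the induced ring homomorphism on p-typical Witt vectors of length n. Then there exists a unique ring homomorphism Φ_n : W_n(A/pA) → A/p^nA such that Φ_n(W_n(π)(x)) equals the class of w_{n-1}(x) modulo p^nA for every x ∈ W_n(A), where w_{n-1} is the (n-1)-th ghost component. -/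
/-- The coefficientwise application of a map `f : A → B` to a truncated Witt vector,
i.e. the map `W_n(f) : W_n(A) → W_n(B)`. -/
noncomputable def wittMapFun (p : ℕ) [Fact p.Prime] {n : ℕ} {A B : Type*}
    [CommRing A] [CommRing B] (f : A → B)
    (x : TruncatedWittVector p n A) : TruncatedWittVector p n B :=
  TruncatedWittVector.mk p fun i => f (x.coeff i)

/-- The `r`-th ghost component of a truncated Witt vector:
`w_r(x) = x_0 ^ (p^r) + p * x_1 ^ (p^(r-1)) + ⋯ + p^r * x_r`. -/
noncomputable def truncatedGhost (p : ℕ) [Fact p.Prime] {n : ℕ} {A : Type*} [CommRing A]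
    (x : TruncatedWittVector p n A) (r : ℕ) : A :=
  ∑ s ∈ Finset.range (r + 1), (p : A) ^ s *
    (if h : s < n then x.coeff ⟨s, h⟩ else 0) ^ p ^ (r - s)

open WittVector TruncatedWittVector Finset

/-- If `p` is a non-zero divisor in `A`, there is a unique ring homomorphism
`Φₙ : Wₙ(A/pA) → A/pⁿA` such that `Φₙ(Wₙ(π)(x))` is the class of the top ghost component
`w_{n-1}(x)` for every `x ∈ Wₙ(A)`, where `π : A → A/pA` is the quotient map. -/
theorem existsUnique_ghost_descent (p : ℕ) [Fact p.Prime] (A : Type*) [CommRing A]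
    (hpA : (p : A) ∈ nonZeroDivisors A) (n : ℕ) (hn : 1 ≤ n) :
    ∃! Φ : TruncatedWittVector p n (A ⧸ Ideal.span {(p : A)}) →+*
        A ⧸ Ideal.span {(p : A) ^ n},
      ∀ x : TruncatedWittVector p n A,
        Φ (wittMapFun p (Ideal.Quotient.mk (Ideal.span {(p : A)})) x) =
          Ideal.Quotient.mk (Ideal.span {(p : A) ^ n}) (truncatedGhost p x (n - 1)) := by
  have hp : p.Prime := Fact.out
  obtain ⟨m, rfl⟩ : ∃ m, n = m + 1 := ⟨n - 1, (Nat.succ_pred_eq_of_pos hn).symm⟩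
  set I : Ideal A := Ideal.span {(p : A)} with hI
  set J : Ideal A := Ideal.span {(p : A) ^ (m + 1)} with hJ
  set π : A →+* A ⧸ I := Ideal.Quotient.mk I with hπ
  have htrA : ∀ y : TruncatedWittVector p (m + 1) A, WittVector.truncate (m + 1) y.out = y :=
    fun y => y.truncateFun_out
  have htrQ : ∀ y : TruncatedWittVector p (m + 1) (A ⧸ I),
      WittVector.truncate (m + 1) y.out = y := fun y => y.truncateFun_out
  -- the map `g0 : 𝕎 A → A/J`
  set g0 : WittVector p A →+* A ⧸ J :=
    (Ideal.Quotient.mk J).comp (WittVector.ghostComponent m) with hg0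
  have hker0 : RingHom.ker (WittVector.truncate (p := p) (R := A) (m + 1)) ≤ RingHom.ker g0 := by
    intro x hx
    rw [WittVector.mem_ker_truncate] at hx
    rw [RingHom.mem_ker, hg0, RingHom.comp_apply, WittVector.ghostComponent_apply,
      aeval_wittPolynomial]
    rw [show (∑ i ∈ range (m + 1), (p : A) ^ i * x.coeff i ^ p ^ (m - i)) = 0 from ?_,
      map_zero]
    refine Finset.sum_eq_zero fun i hi => ?_
    rw [hx i (mem_range.mp hi), zero_pow (pow_ne_zero _ hp.ne_zero), mul_zero]
  set h : TruncatedWittVector p (m + 1) A →+* A ⧸ J :=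
    (WittVector.truncate (m + 1)).liftOfRightInverse TruncatedWittVector.out
      TruncatedWittVector.truncateFun_out ⟨g0, hker0⟩ with hh
  have hhval : ∀ x : WittVector p A, h (WittVector.truncate (m + 1) x) = g0 x := fun x =>
    RingHom.liftOfRightInverse_comp_apply _ _ _ _ x
  -- the map F : W_{m+1}(A) → W_{m+1}(A/I)
  have hkerF0 : RingHom.ker (WittVector.truncate (p := p) (R := A) (m + 1)) ≤
      RingHom.ker ((WittVector.truncate (m + 1)).comp (WittVector.map π)) := by
    intro x hx
    rw [WittVector.mem_ker_truncate] at hx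
    rw [RingHom.mem_ker, RingHom.comp_apply, ← RingHom.mem_ker,
      WittVector.mem_ker_truncate]
    intro i hi
    rw [WittVector.map_coeff, hx i hi, map_zero]
  set F : TruncatedWittVector p (m + 1) A →+* TruncatedWittVector p (m + 1) (A ⧸ I) :=
    (WittVector.truncate (m + 1)).liftOfRightInverse TruncatedWittVector.out
      TruncatedWittVector.truncateFun_out
      ⟨(WittVector.truncate (m + 1)).comp (WittVector.map π), hkerF0⟩ with hF
  have hFval : ∀ x : WittVector p A, F (WittVector.truncate (m + 1) x) =
      WittVector.truncate (m + 1) (WittVector.map π x) := fun x =>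
    RingHom.liftOfRightInverse_comp_apply _ _ _ _ x
  have hFeq : ∀ y : TruncatedWittVector p (m + 1) A, F y = wittMapFun p π y := by
    intro y
    have := hFval y.out
    rw [htrA y] at this
    rw [this]
    ext i
    rw [wittMapFun, TruncatedWittVector.coeff_mk, WittVector.coeff_truncate,
      WittVector.map_coeff, TruncatedWittVector.coeff_out]
  have hFsurj : Function.Surjective F := by
    intro z
    obtain ⟨w, hw⟩ := WittVector.map_surjective π Ideal.Quotient.mk_surjective z.out
    exact ⟨WittVector.truncate (m + 1) w, by rw [hFval, hw, htrQ]⟩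
  -- key congruence : kernel of F maps into kernel of h
  have hker : RingHom.ker F ≤ RingHom.ker h := by
    intro x hx
    rw [RingHom.mem_ker] at hx ⊢
    have hcoeff : ∀ i < m + 1, (p : A) ∣ x.out.coeff i := by
      intro i hi
      have h1 : (WittVector.truncate (m + 1) (WittVector.map π x.out)).coeff ⟨i, hi⟩ = 0 := by
        rw [← hFval, htrA, hx, TruncatedWittVector.coeff_zero]
      rw [WittVector.coeff_truncate, WittVector.map_coeff] at h1
      rw [← Ideal.mem_span_singleton, ← hI]
      exact Ideal.Quotient.eq_zero_iff_mem.mp h1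
    rw [← htrA x, hhval, hg0, RingHom.comp_apply]
    rw [Ideal.Quotient.eq_zero_iff_mem, WittVector.ghostComponent_apply, aeval_wittPolynomial]
    rw [hJ, Ideal.mem_span_singleton]
    refine Finset.dvd_sum fun i hi => ?_
    have hi' : i ≤ m := Nat.lt_succ_iff.mp (mem_range.mp hi)
    have hd : (p : A) ^ (m - i + 1) ∣ x.out.coeff i ^ p ^ (m - i) := by
      have := dvd_sub_pow_of_dvd_sub
        (show (p : A) ∣ x.out.coeff i - 0 by
          rw [sub_zero]; exact hcoeff i (Nat.lt_succ_of_le hi')) (m - i)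
      rwa [zero_pow (pow_ne_zero _ hp.ne_zero), sub_zero] at this
    calc (p : A) ^ (m + 1) = (p : A) ^ i * (p : A) ^ (m - i + 1) := by
          rw [← pow_add]; congr 1; omega
      _ ∣ (p : A) ^ i * x.out.coeff i ^ p ^ (m - i) := mul_dvd_mul_left _ hd
  -- the descended homomorphism
  set Φ : TruncatedWittVector p (m + 1) (A ⧸ I) →+* A ⧸ J :=
    F.liftOfRightInverse (Function.surjInv hFsurj)
      (Function.rightInverse_surjInv hFsurj) ⟨h, hker⟩ with hΦ
  have hΦval : ∀ x, Φ (F x) = h x := fun x =>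
    RingHom.liftOfRightInverse_comp_apply _ _ _ _ x
  have hghost : ∀ x : TruncatedWittVector p (m + 1) A,
      h x = Ideal.Quotient.mk J (truncatedGhost p x (m + 1 - 1)) := by
    intro x
    rw [← htrA x, hhval, hg0, RingHom.comp_apply, WittVector.ghostComponent_apply,
      aeval_wittPolynomial, htrA]
    congr 1
  refine ⟨Φ, fun x => ?_, fun Ψ hΨ => ?_⟩
  · rw [← hFeq, hΦval, hghost]
  · ext y
    obtain ⟨x, rfl⟩ := hFsurj y
    rw [hFeq, hΨ, ← hghost, ← hΦval, hFeq]
end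

section
/- Let p be a prime number, A a commutative ring in which p is a non-zero divisor, φ : A → A a lift of Frobenius, and n ≥ 2 an integer. Let Φ_n : W_n(A/pA) → A/p^nA and Φ_{n-1} : W_{n-1}(A/pA) → A/p^{n-1}A be the ring homomorphisms induced by the top ghost components, let Res : W_n(A/pA) → W_{n-1}(A/pA) be the restriction (truncation) map forgetting the last Witt coefficient, let π_n : A/p^nA → A/p^{n-1}A be the canonical surjection, and let φ̄ : A/p^{n-1}A → A/p^{n-1}A be the ring homomorphism induced by φ. Then π_n ∘ Φ_n = φ̄ ∘ Φ_{n-1} ∘ Res as maps W_n(A/pA) → A/p^{n-1}A. -/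
/-- Compatibility of the maps `Φₙ` induced by the top ghost components with restriction:
`πₙ ∘ Φₙ = φ̄ ∘ Φ_{n-1} ∘ Res`, where `πₙ : A/pⁿA → A/p^(n-1)A` is the canonical
surjection, `Res : Wₙ(A/pA) → W_{n-1}(A/pA)` is the truncation map, and `φ̄` is induced
by the Frobenius lift `φ`. -/
theorem ghost_descent_restriction (p : ℕ) [Fact p.Prime] (A : Type*) [CommRing A]
    (hpA : (p : A) ∈ nonZeroDivisors A)
    (φ : A →+* A) (hφ : ∀ x : A, φ x - x ^ p ∈ Ideal.span {(p : A)})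
    (n : ℕ) (hn : 2 ≤ n)
    (Φn : TruncatedWittVector p n (A ⧸ Ideal.span {(p : A)}) →+*
      A ⧸ Ideal.span {(p : A) ^ n})
    (hΦn : ∀ x : TruncatedWittVector p n A,
      Φn (wittMapFun p (Ideal.Quotient.mk (Ideal.span {(p : A)})) x) =
        Ideal.Quotient.mk (Ideal.span {(p : A) ^ n}) (truncatedGhost p x (n - 1)))
    (Φn1 : TruncatedWittVector p (n - 1) (A ⧸ Ideal.span {(p : A)}) →+*
      A ⧸ Ideal.span {(p : A) ^ (n - 1)})
    (hΦn1 : ∀ x : TruncatedWittVector p (n - 1) A,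
      Φn1 (wittMapFun p (Ideal.Quotient.mk (Ideal.span {(p : A)})) x) =
        Ideal.Quotient.mk (Ideal.span {(p : A) ^ (n - 1)}) (truncatedGhost p x (n - 2)))
    (φbar : A ⧸ Ideal.span {(p : A) ^ (n - 1)} →+* A ⧸ Ideal.span {(p : A) ^ (n - 1)})
    (hφbar : ∀ a : A, φbar (Ideal.Quotient.mk (Ideal.span {(p : A) ^ (n - 1)}) a) =
      Ideal.Quotient.mk (Ideal.span {(p : A) ^ (n - 1)}) (φ a)) :
    ∀ x : TruncatedWittVector p n (A ⧸ Ideal.span {(p : A)}),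
      Ideal.Quotient.factor (S := Ideal.span {(p : A) ^ n}) (T := Ideal.span {(p : A) ^ (n - 1)})
          (Ideal.span_singleton_le_span_singleton.2 (pow_dvd_pow (p : A) (by omega)))
          (Φn x) =
        φbar (Φn1 (TruncatedWittVector.truncate (by omega : n - 1 ≤ n) x)) := by
  intro x
  obtain ⟨y, rfl⟩ : ∃ y : TruncatedWittVector p n A,
      wittMapFun p (Ideal.Quotient.mk (Ideal.span {(p : A)})) y = x := by
    refine ⟨TruncatedWittVector.mk p fun i => (Ideal.Quotient.mk_surjective (x.coeff i)).choose, ?_⟩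
    ext i
    simp only [wittMapFun, TruncatedWittVector.coeff_mk]
    exact (Ideal.Quotient.mk_surjective (x.coeff i)).choose_spec
  have htr : TruncatedWittVector.truncate (by omega : n - 1 ≤ n)
      (wittMapFun p (Ideal.Quotient.mk (Ideal.span {(p : A)})) y)
      = wittMapFun p (Ideal.Quotient.mk (Ideal.span {(p : A)}))
        (TruncatedWittVector.truncate (by omega : n - 1 ≤ n) y) := by
    ext i
    simp only [wittMapFun, TruncatedWittVector.coeff_truncate, TruncatedWittVector.coeff_mk]
  rw [hΦn, htr, hΦn1, hφbar, Ideal.Quotient.factor_mk,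
    Ideal.Quotient.mk_eq_mk_iff_sub_mem, Ideal.mem_span_singleton]
  -- compute the two ghost sums
  have hg1 : truncatedGhost p y (n - 1)
      = ∑ s ∈ Finset.range n, (p : A) ^ s *
          (y.coeff ⟨s % n, Nat.mod_lt _ (by omega)⟩) ^ p ^ (n - 1 - s) := by
    unfold truncatedGhost
    rw [show n - 1 + 1 = n by omega]
    refine Finset.sum_congr rfl fun s hs => ?_
    have hs' : s < n := Finset.mem_range.mp hs
    rw [dif_pos hs']
    congr 2
    congr 1
    exact Fin.ext (Nat.mod_eq_of_lt hs').symm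
  have hg2 : truncatedGhost p (TruncatedWittVector.truncate (by omega : n - 1 ≤ n) y) (n - 2)
      = ∑ s ∈ Finset.range (n - 1), (p : A) ^ s *
          (y.coeff ⟨s % n, Nat.mod_lt _ (by omega)⟩) ^ p ^ (n - 2 - s) := by
    unfold truncatedGhost
    rw [show n - 2 + 1 = n - 1 by omega]
    refine Finset.sum_congr rfl fun s hs => ?_
    have hs' : s < n - 1 := Finset.mem_range.mp hs
    rw [dif_pos hs', TruncatedWittVector.coeff_truncate]
    congr 2
    congr 1
    exact Fin.ext (Nat.mod_eq_of_lt (show s < n by omega)).symm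
  rw [hg1, hg2, map_sum]
  have hsplit : (∑ s ∈ Finset.range n, (p : A) ^ s *
        (y.coeff ⟨s % n, Nat.mod_lt _ (by omega)⟩) ^ p ^ (n - 1 - s))
      = (∑ s ∈ Finset.range (n - 1), (p : A) ^ s *
        (y.coeff ⟨s % n, Nat.mod_lt _ (by omega)⟩) ^ p ^ (n - 1 - s))
        + (p : A) ^ (n - 1) *
        (y.coeff ⟨(n - 1) % n, Nat.mod_lt _ (by omega)⟩) ^ p ^ (n - 1 - (n - 1)) := by
    rw [← Finset.sum_range_succ, show n - 1 + 1 = n by omega]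
  rw [hsplit]
  have key : ∀ s ∈ Finset.range (n - 1), (p : A) ^ (n - 1) ∣
      ((p : A) ^ s * (y.coeff ⟨s % n, Nat.mod_lt _ (by omega)⟩) ^ p ^ (n - 1 - s)
        - φ ((p : A) ^ s * (y.coeff ⟨s % n, Nat.mod_lt _ (by omega)⟩) ^ p ^ (n - 2 - s))) := by
    intro s hs
    have hs' : s < n - 1 := Finset.mem_range.mp hs
    set a := y.coeff ⟨s % n, Nat.mod_lt _ (by omega)⟩ with ha
    have h1 : (p : A) ∣ φ a - a ^ p := Ideal.mem_span_singleton.mp (hφ a)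
    have h2 := dvd_sub_pow_of_dvd_sub h1 (n - 2 - s)
    have h3 : (a ^ p) ^ p ^ (n - 2 - s) = a ^ p ^ (n - 1 - s) := by
      rw [show n - 1 - s = (n - 2 - s) + 1 from by omega, pow_succ', pow_mul]
    rw [h3] at h2
    have h4 : φ ((p : A) ^ s * a ^ p ^ (n - 2 - s))
        = (p : A) ^ s * (φ a) ^ p ^ (n - 2 - s) := by
      rw [map_mul, map_pow, map_pow, map_natCast]
    rw [h4]
    have : (p : A) ^ s * a ^ p ^ (n - 1 - s) - (p : A) ^ s * (φ a) ^ p ^ (n - 2 - s)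
        = -((p : A) ^ s * (φ a ^ p ^ (n - 2 - s) - a ^ p ^ (n - 1 - s))) := by ring
    rw [this]
    refine dvd_neg.mpr ?_
    have h5 : (p : A) ^ (n - 1) = (p : A) ^ s * (p : A) ^ (n - 2 - s + 1) := by
      rw [show n - 1 = s + (n - 2 - s + 1) from by omega, pow_add]
    rw [h5]
    exact mul_dvd_mul_left _ h2
  have hfin := Finset.dvd_sum key
  have : (∑ s ∈ Finset.range (n - 1), (p : A) ^ s *
        (y.coeff ⟨s % n, Nat.mod_lt _ (by omega)⟩) ^ p ^ (n - 1 - s))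
        + (p : A) ^ (n - 1) *
        (y.coeff ⟨(n - 1) % n, Nat.mod_lt _ (by omega)⟩) ^ p ^ (n - 1 - (n - 1))
      - (∑ s ∈ Finset.range (n - 1),
          φ ((p : A) ^ s * (y.coeff ⟨s % n, Nat.mod_lt _ (by omega)⟩) ^ p ^ (n - 2 - s)))
      = (∑ s ∈ Finset.range (n - 1),
          ((p : A) ^ s * (y.coeff ⟨s % n, Nat.mod_lt _ (by omega)⟩) ^ p ^ (n - 1 - s)
            - φ ((p : A) ^ s * (y.coeff ⟨s % n, Nat.mod_lt _ (by omega)⟩) ^ p ^ (n - 2 - s))))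
        + (p : A) ^ (n - 1) *
        (y.coeff ⟨(n - 1) % n, Nat.mod_lt _ (by omega)⟩) ^ p ^ (n - 1 - (n - 1)) := by
    rw [Finset.sum_sub_distrib]; ring
  rw [this]
  exact dvd_add hfin (Dvd.intro _ rfl)
end
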